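/- Over an algebraically closed field F of characteristic not 2, every pair (A,B) of skew-symmetric n×n matrices with A invertible is congruent to a direct sum of pairs of the form J_m(λ)-pair = ( [[0,I_m],[-I_m,0]], [[0,J_m(λ)],[-J_m(λ)ᵀ,0]] ) with λ ∈ F. -/

import Mathlib

open Matrix

/-- The `m × m` lower Jordan block with `lam` on the diagonal and `1` on the subdiagonal. -/
def jordanBlock {F : Type*} [Field F] (m : ℕ) (lam : F) : Matrix (Fin m) (Fin m) F :=
  Matrix.of fun i j => if i = j then lam else if (i : ℕ) = (j : ℕ) + 1 then 1 else 0

/-- `(P, Q)` is (a copy of) the pair `𝒥_m(λ) = ([[0,I],[-I,0]], [[0,J_m(λ)],[-J_m(λ)ᵀ,0]])`. -/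
def IsJPair {F : Type*} [Field F] {d : ℕ} (P Q : Matrix (Fin d) (Fin d) F) : Prop :=
  ∃ (m : ℕ) (lam : F) (e : Fin m ⊕ Fin m ≃ Fin d),
    P = Matrix.reindex e e (fromBlocks 0 1 (-1) 0) ∧
    Q = Matrix.reindex e e (fromBlocks 0 (jordanBlock m lam) (-(jordanBlock m lam)ᵀ) 0)

/-!
Put `ω(u, v) = uᵀ A v` and `T = A⁻¹ B`, so that `uᵀ B v = ω(u, T v)` and `T` is self-adjoint for the
symplectic form `ω`. Let `λ` be an eigenvalue of `T` and `N = T - λ`. Taking `m + 1` to be the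
nilpotency index of `N` on its generalized kernel, there are `x, y` killed by `N ^ (m + 1)` with
`ω(x, N ^ k y) = δ_{k m}` (nondegeneracy plus the Fitting decomposition), while `ω` vanishes on the
pairs `N ^ a x, N ^ b x` and `N ^ a y, N ^ b y` because `2 ≠ 0`. In the basis
`N ^ (m - i) x, N ^ j y` of their span `U` the two forms have Gram matrices `𝒥_{m+1}(λ)`, so `U` is
nondegenerate and `T`-invariant; its `ω`-orthogonal complement is then a `T`-invariant
nondegenerate complement, and induction on the dimension finishes.
-/

open Module

section

variable {F V : Type*} [Field F] [AddCommGroup V] [Module F V]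

def jPairA (m : ℕ) : Matrix (Fin m ⊕ Fin m) (Fin m ⊕ Fin m) F := fromBlocks 0 1 (-1) 0

def jPairB (m : ℕ) (lam : F) : Matrix (Fin m ⊕ Fin m) (Fin m ⊕ Fin m) F :=
  fromBlocks 0 (jordanBlock m lam) (-(jordanBlock m lam)ᵀ) 0

theorem isUnit_jPairA (m : ℕ) : IsUnit (jPairA m : Matrix (Fin m ⊕ Fin m) (Fin m ⊕ Fin m) F) :=
  (isUnit_iff_isUnit_det _).mpr <| isUnit_det_of_right_inverse (B := -jPairA m) <| by
    simp [jPairA, fromBlocks_multiply, fromBlocks_neg, ← fromBlocks_one]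

theorem blockDiagonal'_eq_reindex_fromBlocks {R : Type*} [Zero R] {ι₁ ι₂ : Type*}
    [DecidableEq ι₁] [DecidableEq ι₂] {β : ι₁ ⊕ ι₂ → Type*} (M : ∀ i, Matrix (β i) (β i) R) :
    blockDiagonal' M = reindex (Equiv.sumSigmaDistrib β).symm (Equiv.sumSigmaDistrib β).symm
      (fromBlocks (blockDiagonal' fun i => M (.inl i)) 0 0
        (blockDiagonal' fun i => M (.inr i))) := by
  ext ⟨i | i, s⟩ ⟨j | j, t⟩ <;> simp [blockDiagonal'_apply]

theorem blockDiagonal'_reindex_eq_reindex_blockDiagonal' {R : Type*} [Zero R] {ι κ : Type*}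
    [DecidableEq ι] [DecidableEq κ] (e : κ ≃ ι) {α : κ → Type*} {β : ι → Type*}
    (f : ∀ k, α k ≃ β (e k)) (M : ∀ i, Matrix (β i) (β i) R) :
    blockDiagonal' (fun k => reindex (f k).symm (f k).symm (M (e k))) =
      reindex ((Equiv.sigmaCongrRight f).trans (Equiv.sigmaCongrLeft e)).symm
        ((Equiv.sigmaCongrRight f).trans (Equiv.sigmaCongrLeft e)).symm (blockDiagonal' M) := by
  ext ⟨k, a⟩ ⟨k', b⟩
  rcases eq_or_ne k k' with rfl | hk
  · exact (blockDiagonal'_apply_eq _ _ _ _).trans (blockDiagonal'_apply_eq M (e k) _ _).symm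
  · exact (blockDiagonal'_apply_ne _ _ _ hk).trans
      (blockDiagonal'_apply_ne M (f k a) (f k' b) (e.injective.ne hk)).symm

namespace LinearMap.BilinForm

theorem toMatrix_reindex {κ κ' : Type*} [Fintype κ] [Fintype κ'] [DecidableEq κ] [DecidableEq κ']
    (β : LinearMap.BilinForm F V) (b : Basis κ F V) (e : κ ≃ κ') :
    toMatrix (b.reindex e) β = reindex e e (toMatrix b β) := by
  ext; simp [toMatrix_apply]

theorem toMatrix_prodEquivOfIsCompl {κ₁ κ₂ : Type*} [Fintype κ₁] [Fintype κ₂] [DecidableEq κ₁]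
    [DecidableEq κ₂] (β : LinearMap.BilinForm F V) {U W : Submodule F V} (h : IsCompl U W)
    (horth : ∀ u ∈ U, ∀ w ∈ W, β u w = 0 ∧ β w u = 0) (b₁ : Basis κ₁ F U) (b₂ : Basis κ₂ F W) :
    toMatrix ((b₁.prod b₂).map (U.prodEquivOfIsCompl W h)) β =
      fromBlocks (toMatrix b₁ (β.restrict U)) 0 0 (toMatrix b₂ (β.restrict W)) := by
  ext (i | i) (j | j) <;> simp [toMatrix_apply, horth]

theorem linearIndependent_of_isUnit_gram {κ : Type*} [Fintype κ] [DecidableEq κ]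
    {ω : LinearMap.BilinForm F V} {v : κ → V} (h : IsUnit (Matrix.of fun s t => ω (v s) (v t))) :
    LinearIndependent F v := by
  rw [Fintype.linearIndependent_iff]
  intro g hg
  have hvec : g ᵥ* (Matrix.of fun s t => ω (v s) (v t)) = 0 := by
    ext t
    have : ω (∑ s, g s • v s) (v t) = 0 := by rw [hg, map_zero, LinearMap.zero_apply]
    simpa [vecMul, dotProduct] using this
  rw [vecMul_injective_iff_isUnit.mpr h (hvec.trans (zero_vecMul _).symm)]
  exact fun _ => rfl

theorem exists_apply_eq_ite_of_linearIndependent [FiniteDimensional F V]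
    {ω : LinearMap.BilinForm F V} (hω : ω.Nondegenerate) {κ : Type*} [DecidableEq κ] {v : κ → V}
    (hv : LinearIndependent F v) (i₀ : κ) : ∃ x, ∀ i, ω x (v i) = if i = i₀ then 1 else 0 := by
  obtain ⟨g, hg⟩ := LinearMap.exists_extend ((Basis.span hv).coord i₀)
  refine ⟨(ω.toDual hω).symm g, fun i => ?_⟩
  have := LinearMap.congr_fun hg (Basis.span hv i)
  rwa [LinearMap.comp_apply, Submodule.subtype_apply, Basis.coord_apply, Basis.repr_self,
    Finsupp.single_apply, Basis.span_apply, ← LinearEquiv.apply_symm_apply (ω.toDual hω) g,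
    toDual_def] at this

end LinearMap.BilinForm

theorem linearIndependent_pow_apply {N : Module.End F V} {y : V} :
    ∀ {m : ℕ}, (N ^ (m + 1)) y = 0 → (N ^ m) y ≠ 0 →
      LinearIndependent F (fun k : Fin (m + 1) => (N ^ (k : ℕ)) y)
  | 0, _, hy => by simpa [linearIndependent_unique_iff] using hy
  | m + 1, hkill, hy => by
    have hNy : LinearIndependent F (fun k : Fin (m + 1) => (N ^ (k : ℕ)) (N y)) :=
      linearIndependent_pow_apply (by rwa [← Module.End.mul_apply, ← pow_succ])
        (by rwa [← Module.End.mul_apply, ← pow_succ])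
    have hcons : (fun k : Fin (m + 2) => (N ^ (k : ℕ)) y) =
        Fin.cons y (fun k : Fin (m + 1) => (N ^ (k : ℕ)) (N y)) := by
      ext k
      refine Fin.cases ?_ (fun k => ?_) k
      · simp
      · simp [pow_succ]
    rw [hcons, linearIndependent_finCons]
    refine ⟨hNy, fun hspan => hy ?_⟩
    have hspan_le : Submodule.span F (Set.range fun k : Fin (m + 1) => (N ^ (k : ℕ)) (N y)) ≤
        LinearMap.ker (N ^ (m + 1)) := by
      rw [Submodule.span_le]
      rintro _ ⟨k, rfl⟩
      rw [SetLike.mem_coe, LinearMap.mem_ker, ← Module.End.mul_apply, ← Module.End.mul_apply,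
        mul_assoc, ← pow_succ, ← pow_add]
      exact Module.End.pow_map_zero_of_le (by omega) hkill
    exact hspan_le hspan

section SelfAdjoint

variable {ω : LinearMap.BilinForm F V} {N : Module.End F V}

theorem LinearMap.IsSelfAdjoint.pow (hN : ω.IsSelfAdjoint N) (k : ℕ) :
    ω.IsSelfAdjoint ⇑(N ^ k) := by
  induction k with
  | zero => exact isAdjointPair_one
  | succ k ih => simpa only [LinearMap.IsSelfAdjoint, ← pow_succ, ← pow_succ'] using ih.mul hN

theorem LinearMap.IsSelfAdjoint.apply_pow_pow (hN : ω.IsSelfAdjoint N) (a b : ℕ) (u v : V) :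
    ω ((N ^ a) u) ((N ^ b) v) = ω u ((N ^ (a + b)) v) := by
  rw [hN.pow, ← Module.End.mul_apply, ← pow_add]

theorem LinearMap.IsSelfAdjoint.apply_pow_pow_self (hchar : (2 : F) ≠ 0) (hω : ω.IsAlt)
    (hN : ω.IsSelfAdjoint N) (a b : ℕ) (u : V) : ω ((N ^ a) u) ((N ^ b) u) = 0 := by
  have hskew : ω u ((N ^ (a + b)) u) = -ω u ((N ^ (a + b)) u) := by
    rw [hω.neg_eq, ← hN.pow]
  rw [hN.apply_pow_pow]
  exact (mul_eq_zero.mp (by linear_combination hskew : (2 : F) * _ = 0)).resolve_left hchar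

theorem exists_apply_pow_eq_ite [FiniteDimensional F V] (hω : ω.Nondegenerate)
    (hN : ω.IsSelfAdjoint N) (hker : LinearMap.ker N ≠ ⊥) :
    ∃ (m : ℕ) (x y : V), (N ^ (m + 1)) x = 0 ∧ (N ^ (m + 1)) y = 0 ∧
      ∀ k, ω x ((N ^ k) y) = if k = m then 1 else 0 := by
  classical
  obtain ⟨r, hr, hr1⟩ := (N.eventually_isCompl_ker_pow_range_pow.and
    (Filter.eventually_ge_atTop 1)).exists
  have hex : ∃ j, LinearMap.ker (N ^ j) = LinearMap.ker (N ^ r) := ⟨r, rfl⟩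
  have hfind_ne : Nat.find hex ≠ 0 := by
    intro h0
    have := Nat.find_spec hex
    rw [h0, pow_zero, Module.End.one_eq_id, LinearMap.ker_id] at this
    refine hker (eq_bot_iff.mpr fun v hv => ?_)
    rw [this]
    exact Module.End.pow_map_zero_of_le hr1 (by simpa using hv)
  obtain ⟨m, hm⟩ := Nat.exists_eq_add_one_of_ne_zero hfind_ne
  have hker_m : LinearMap.ker (N ^ (m + 1)) = LinearMap.ker (N ^ r) := hm ▸ Nat.find_spec hex
  have hmr : m + 1 ≤ r := hm ▸ Nat.find_min' hex rfl
  obtain ⟨y, hy, hym⟩ : ∃ y ∈ LinearMap.ker (N ^ (m + 1)), y ∉ LinearMap.ker (N ^ m) := by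
    refine SetLike.exists_of_lt (lt_of_le_of_ne (fun v hv => ?_) fun h => ?_)
    · exact Module.End.pow_map_zero_of_le (Nat.le_succ m) hv
    · exact Nat.find_min hex (by omega) (h.trans hker_m)
  rw [LinearMap.mem_ker] at hy hym
  obtain ⟨x₀, hx₀⟩ := LinearMap.BilinForm.exists_apply_eq_ite_of_linearIndependent hω
    (linearIndependent_pow_apply hy hym) (Fin.last m)
  -- projecting `x₀` onto `ker (N ^ r)` along `range (N ^ r)` keeps its pairings with `ker (N ^ r)`
  obtain ⟨x, hx, _, ⟨u, rfl⟩, rfl⟩ :=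
    Submodule.mem_sup.mp (hr.sup_eq_top ▸ Submodule.mem_top (x := x₀))
  refine ⟨m, x, y, by rwa [← LinearMap.mem_ker, hker_m], hy, fun k => ?_⟩
  rcases lt_or_ge m k with hk | hk
  · rw [Module.End.pow_map_zero_of_le hk hy, map_zero, if_neg hk.ne']
  have hu : ω ((N ^ r) u) ((N ^ k) y) = 0 := by
    rw [hN.apply_pow_pow, Module.End.pow_map_zero_of_le (by omega) hy, map_zero]
  simpa [hu, Fin.ext_iff] using hx₀ ⟨k, by omega⟩

end SelfAdjoint

section Chain

variable {ω : LinearMap.BilinForm F V} {N : Module.End F V} {m : ℕ} {x y : V}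

def jChain (N : Module.End F V) (m : ℕ) (x y : V) : Fin (m + 1) ⊕ Fin (m + 1) → V :=
  Sum.elim (fun i => (N ^ (i.rev : ℕ)) x) (fun j => (N ^ (j : ℕ)) y)

theorem jChain_gram (hchar : (2 : F) ≠ 0) (hω : ω.IsAlt) (hN : ω.IsSelfAdjoint N)
    (hxy : ∀ k, ω x ((N ^ k) y) = if k = m then 1 else 0) (s t : Fin (m + 1) ⊕ Fin (m + 1)) :
    ω (jChain N m x y s) (jChain N m x y t) = jPairA (m + 1) s t ∧
      ∀ lam : F, ω (jChain N m x y s) ((N + lam • 1) (jChain N m x y t)) =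
        jPairB (m + 1) lam s t := by
  have hxy' : ∀ a b, ω ((N ^ a) x) ((N ^ b) y) = if a + b = m then 1 else 0 := fun a b => by
    rw [hN.apply_pow_pow, hxy]
  have hyx : ∀ a b, ω ((N ^ a) y) ((N ^ b) x) = -if b + a = m then 1 else 0 := fun a b => by
    rw [← hω.neg_eq, hxy']
  have hshift : ∀ (b : ℕ) (v : V) (lam : F),
      (N + lam • 1) ((N ^ b) v) = (N ^ (b + 1)) v + lam • (N ^ b) v := fun b v lam => by
    rw [LinearMap.add_apply, LinearMap.smul_apply, Module.End.one_apply, ← Module.End.mul_apply,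
      ← pow_succ']
  rcases s with i | i <;> rcases t with j | j <;>
    simp only [jChain, Sum.elim_inl, Sum.elim_inr, jPairA, jPairB, fromBlocks_apply₁₁,
      fromBlocks_apply₁₂, fromBlocks_apply₂₁, fromBlocks_apply₂₂, hshift, map_add, map_smul,
      hxy', hyx, hN.apply_pow_pow_self hchar hω, Matrix.zero_apply, Matrix.neg_apply,
      Matrix.one_apply, transpose_apply, jordanBlock, of_apply, smul_eq_mul, Fin.ext_iff,
      Fin.val_rev] <;>
    refine ⟨?_, fun lam => ?_⟩ <;> have := i.isLt <;> have := j.isLt <;> (try split_ifs) <;>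
    first | trivial | omega | ring

theorem jChain_span_le_comap (hx : (N ^ (m + 1)) x = 0) (hy : (N ^ (m + 1)) y = 0) :
    Submodule.span F (Set.range (jChain N m x y)) ≤
      (Submodule.span F (Set.range (jChain N m x y))).comap N := by
  set S := Submodule.span F (Set.range (jChain N m x y))
  have hpow : ∀ a, (N ^ a) x ∈ S ∧ (N ^ a) y ∈ S := by
    intro a
    rcases le_or_gt a m with ha | ha
    · exact ⟨Submodule.subset_span ⟨.inl (Fin.rev ⟨a, by omega⟩),
          by simp only [jChain, Sum.elim_inl, Fin.rev_rev]⟩,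
        Submodule.subset_span ⟨.inr ⟨a, by omega⟩, rfl⟩⟩
    · simp [Module.End.pow_map_zero_of_le ha hx, Module.End.pow_map_zero_of_le ha hy]
  rw [Submodule.span_le]
  rintro _ ⟨i | j, rfl⟩ <;>
    simp only [SetLike.mem_coe, Submodule.mem_comap, jChain, Sum.elim_inl, Sum.elim_inr,
      ← Module.End.mul_apply, ← pow_succ']
  exacts [(hpow _).1, (hpow _).2]

end Chain

def HasJBasis (ω : LinearMap.BilinForm F V) (T : Module.End F V) : Prop :=
  ∃ (ι : Type) (_ : Fintype ι) (_ : DecidableEq ι) (m : ι → ℕ) (lam : ι → F)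
    (b : Basis (Σ i, Fin (m i) ⊕ Fin (m i)) F V),
    LinearMap.BilinForm.toMatrix b ω = blockDiagonal' (fun i => jPairA (m i)) ∧
    LinearMap.BilinForm.toMatrix b (ω.compl₂ T) = blockDiagonal' (fun i => jPairB (m i) (lam i))

theorem LinearMap.BilinForm.restrict_compl₂ (ω : LinearMap.BilinForm F V) (T : Module.End F V)
    {U : Submodule F V} (hTU : ∀ u ∈ U, T u ∈ U) :
    LinearMap.BilinForm.restrict (ω.compl₂ T) U = (ω.restrict U).compl₂ (T.restrict hTU) :=
  rfl

namespace HasJBasis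

variable {ω : LinearMap.BilinForm F V} {T : Module.End F V}

theorem of_subsingleton [Subsingleton V] : HasJBasis ω T :=
  ⟨Empty, inferInstance, inferInstance, Empty.elim, Empty.elim, Basis.empty V,
    by ext ⟨i, _⟩; exact i.elim, by ext ⟨i, _⟩; exact i.elim⟩

theorem of_basis {m : ℕ} {lam : F} (b : Basis (Fin m ⊕ Fin m) F V)
    (hω : LinearMap.BilinForm.toMatrix b ω = jPairA m)
    (hT : LinearMap.BilinForm.toMatrix b (ω.compl₂ T) = jPairB m lam) : HasJBasis ω T := by
  refine ⟨Unit, inferInstance, inferInstance, fun _ => m, fun _ => lam,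
    b.reindex (Equiv.uniqueSigma fun _ : Unit => Fin m ⊕ Fin m).symm, ?_, ?_⟩ <;>
  ext ⟨⟨⟩, s⟩ ⟨⟨⟩, t⟩ <;>
  simp only [LinearMap.BilinForm.toMatrix_reindex, reindex_apply, submatrix_apply,
    blockDiagonal'_apply_eq]
  exacts [congr_fun₂ hω s t, congr_fun₂ hT s t]

theorem of_isCompl {U W : Submodule F V} (hUW : IsCompl U W) (hω : ω.IsRefl)
    (horth : W ≤ ω.orthogonal U) (hTU : ∀ u ∈ U, T u ∈ U) (hTW : ∀ w ∈ W, T w ∈ W)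
    (hU : HasJBasis (ω.restrict U) (T.restrict hTU))
    (hW : HasJBasis (ω.restrict W) (T.restrict hTW)) : HasJBasis ω T := by
  obtain ⟨ι₁, _, _, m₁, lam₁, b₁, hb₁, hb₁'⟩ := hU
  obtain ⟨ι₂, _, _, m₂, lam₂, b₂, hb₂, hb₂'⟩ := hW
  have hωUW : ∀ u ∈ U, ∀ w ∈ W, ω u w = 0 ∧ ω w u = 0 := fun u hu w hw =>
    ⟨horth hw u hu, hω _ _ (horth hw u hu)⟩
  have hTUW : ∀ u ∈ U, ∀ w ∈ W, ω.compl₂ T u w = 0 ∧ ω.compl₂ T w u = 0 := fun u hu w hw =>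
    ⟨(hωUW u hu _ (hTW w hw)).1, (hωUW (T u) (hTU u hu) w hw).2⟩
  refine ⟨ι₁ ⊕ ι₂, inferInstance, inferInstance, Sum.elim m₁ m₂, Sum.elim lam₁ lam₂,
    ((b₁.prod b₂).map (U.prodEquivOfIsCompl W hUW)).reindex
      (Equiv.sumSigmaDistrib fun i => Fin (Sum.elim m₁ m₂ i) ⊕ Fin (Sum.elim m₁ m₂ i)).symm,
    ?_, ?_⟩ <;>
  erw [LinearMap.BilinForm.toMatrix_reindex, blockDiagonal'_eq_reindex_fromBlocks,
    LinearMap.BilinForm.toMatrix_prodEquivOfIsCompl _ hUW (by assumption)]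
  · rw [hb₁, hb₂]; rfl
  · erw [ω.restrict_compl₂ T hTU, hb₁', ω.restrict_compl₂ T hTW, hb₂']
    rfl

end HasJBasis

section Decomposition

variable {ω : LinearMap.BilinForm F V} {T : Module.End F V}

theorem exists_jBlock [FiniteDimensional F V] [IsAlgClosed F] [Nontrivial V] (hchar : (2 : F) ≠ 0)
    (hω : ω.IsAlt) (hnd : ω.Nondegenerate) (hT : ω.IsSelfAdjoint T) :
    ∃ (U : Submodule F V) (hTU : ∀ u ∈ U, T u ∈ U), U ≠ ⊥ ∧ IsCompl U (ω.orthogonal U) ∧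
      HasJBasis (ω.restrict U) (T.restrict hTU) := by
  classical
  obtain ⟨lam, hlam⟩ := T.exists_eigenvalue
  obtain ⟨v, hv⟩ := hlam.exists_hasEigenvector
  set N := T - lam • 1
  have hN : ω.IsSelfAdjoint N := hT.sub (LinearMap.isAdjointPair_one.smul lam)
  have hker : LinearMap.ker N ≠ ⊥ := fun h => hv.2 <| (LinearMap.ker_eq_bot'.mp h) v <| by
    simp [N, hv.apply_eq_smul]
  obtain ⟨m, x, y, hx, hy, hxy⟩ := exists_apply_pow_eq_ite hnd hN hker
  have hgram := jChain_gram hchar hω hN hxy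
  have hTN : T = N + lam • 1 := (sub_add_cancel _ _).symm
  have hli : LinearIndependent F (jChain N m x y) :=
    LinearMap.BilinForm.linearIndependent_of_isUnit_gram <| by
      convert isUnit_jPairA (F := F) (m + 1) using 1
      ext s t; exact (hgram s t).1
  set U := Submodule.span F (Set.range (jChain N m x y))
  have hTU : ∀ u ∈ U, T u ∈ U := fun u hu => by
    rw [hTN, LinearMap.add_apply, LinearMap.smul_apply, Module.End.one_apply]
    exact U.add_mem (jChain_span_le_comap hx hy hu) (U.smul_mem lam hu)
  have hA : LinearMap.BilinForm.toMatrix (Basis.span hli) (ω.restrict U) = jPairA (m + 1) := by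
    ext s t; simp [LinearMap.BilinForm.toMatrix_apply, Basis.span_apply, (hgram s t).1]
  have hB : LinearMap.BilinForm.toMatrix (Basis.span hli)
      ((ω.restrict U).compl₂ (T.restrict hTU)) = jPairB (m + 1) lam := by
    ext s t
    simp [LinearMap.BilinForm.toMatrix_apply, Basis.span_apply, ← (hgram s t).2 lam, ← hTN]
  have hndU : (ω.restrict U).Nondegenerate := by
    rw [LinearMap.BilinForm.nondegenerate_iff_det_ne_zero (Basis.span hli), hA]
    exact ((isUnit_iff_isUnit_det _).mp (isUnit_jPairA (m + 1))).ne_zero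
  refine ⟨U, hTU, ?_,
    LinearMap.BilinForm.isCompl_orthogonal_of_restrict_nondegenerate hω.isRefl hndU,
    HasJBasis.of_basis _ hA hB⟩
  exact (Submodule.ne_bot_iff _).mpr ⟨_, Submodule.subset_span ⟨.inl 0, rfl⟩, hli.ne_zero _⟩

theorem hasJBasis_of_isSelfAdjoint [FiniteDimensional F V] [IsAlgClosed F] (hchar : (2 : F) ≠ 0)
    (hω : ω.IsAlt) (hnd : ω.Nondegenerate) (hT : ω.IsSelfAdjoint T) : HasJBasis ω T := by
  induction h : Module.finrank F V using Nat.strong_induction_on generalizing V with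
  | _ d ih =>
  rcases subsingleton_or_nontrivial V with hV | hV
  · exact HasJBasis.of_subsingleton
  obtain ⟨U, hTU, hU0, hUW, hU⟩ := exists_jBlock hchar hω hnd hT
  set W := ω.orthogonal U
  have hTW : ∀ w ∈ W, T w ∈ W := fun w hw u hu => by
    rw [← hT]; exact hw _ (hTU u hu)
  have hndW : (ω.restrict W).Nondegenerate := by
    rw [LinearMap.BilinForm.restrict_nondegenerate_iff_isCompl_orthogonal hω.isRefl,
      LinearMap.BilinForm.orthogonal_orthogonal hnd hω.isRefl]
    exact hUW.symm
  have hdim : Module.finrank F W < d := by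
    rw [← h, ← Submodule.finrank_add_eq_of_isCompl hUW]
    have := Submodule.one_le_finrank_iff.mpr hU0
    omega
  exact HasJBasis.of_isCompl hUW hω.isRefl le_rfl hTU hTW hU
    (ih _ hdim (fun w => hω w) hndW (fun u v => hT u v) rfl)

end Decomposition

section Matrices

theorem Matrix.toBilin'_apply_swap {ι : Type*} [Fintype ι] [DecidableEq ι] {A : Matrix ι ι F}
    (hA : Aᵀ = -A) (u v : ι → F) :
    Matrix.toBilin' A v u = -Matrix.toBilin' A u v := by
  rw [Matrix.toBilin'_apply', Matrix.toBilin'_apply', dotProduct_mulVec, ← mulVec_transpose, hA,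
    neg_mulVec, neg_dotProduct, dotProduct_comm]

theorem Matrix.isAlt_toBilin' (hchar : (2 : F) ≠ 0) {ι : Type*} [Fintype ι] [DecidableEq ι]
    {A : Matrix ι ι F} (hA : Aᵀ = -A) : (Matrix.toBilin' A).IsAlt := fun u => by
  have := toBilin'_apply_swap hA u u
  exact (mul_eq_zero.mp (by linear_combination this : (2 : F) * _ = 0)).resolve_left hchar

theorem HasJBasis.exists_congruent_blockDiagonal {n : ℕ} {A B : Matrix (Fin n) (Fin n) F}
    {T : Module.End F (Fin n → F)} (h : HasJBasis (Matrix.toBilin' A) T)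
    (hB : (Matrix.toBilin' A).compl₂ T = Matrix.toBilin' B) :
    ∃ (k : ℕ) (sz : Fin k → ℕ)
      (P Q : ∀ i : Fin k, Matrix (Fin (sz i)) (Fin (sz i)) F),
      (∀ i, IsJPair (P i) (Q i)) ∧
      ∃ (S : Matrix (Fin n) (Fin n) F) (e : (Σ i : Fin k, Fin (sz i)) ≃ Fin n),
        IsUnit S ∧
        S * A * Sᵀ = Matrix.reindex e e (Matrix.blockDiagonal' P) ∧
        S * B * Sᵀ = Matrix.reindex e e (Matrix.blockDiagonal' Q) := by
  obtain ⟨ι, _, _, m, lam, b, hbA, hbB⟩ := h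
  set eι := (Fintype.equivFin ι).symm
  set f := fun i => (finSumFinEquiv (m := m (eι i)) (n := m (eι i))).symm
  set e₀ := b.indexEquiv (Pi.basisFun F (Fin n))
  set S := ((Pi.basisFun F (Fin n)).toMatrix (b.reindex e₀))ᵀ
  have hcongr : ∀ C : Matrix (Fin n) (Fin n) F, S * C * Sᵀ =
      reindex e₀ e₀ (LinearMap.BilinForm.toMatrix b (Matrix.toBilin' C)) := fun C => by
    rw [transpose_transpose, ← LinearMap.BilinForm.toMatrix_reindex,
      ← LinearMap.BilinForm.toMatrix_mul_basis_toMatrix (Pi.basisFun F (Fin n)),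
      LinearMap.BilinForm.toMatrix_basisFun, LinearMap.BilinForm.toMatrix'_toBilin']
  refine ⟨Fintype.card ι, fun i => m (eι i) + m (eι i),
    fun i => reindex (f i).symm (f i).symm (jPairA (m (eι i))),
    fun i => reindex (f i).symm (f i).symm (jPairB (m (eι i)) (lam (eι i))),
    fun i => ⟨_, _, _, rfl, rfl⟩, S,
    ((Equiv.sigmaCongrRight f).trans
      (Equiv.sigmaCongrLeft (β := fun i => Fin (m i) ⊕ Fin (m i)) eι)).trans e₀,
    (isUnit_transpose _).mpr
      (@isUnit_of_invertible _ _ _ (Basis.invertibleToMatrix _ _)), ?_, ?_⟩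
  · rw [hcongr, hbA, ← reindex_trans,
      blockDiagonal'_reindex_eq_reindex_blockDiagonal' eι f fun i => jPairA (m i),
      ← reindex_symm, Equiv.trans_apply, Equiv.apply_symm_apply]
  · rw [hcongr, ← hB, hbB, ← reindex_trans,
      blockDiagonal'_reindex_eq_reindex_blockDiagonal' eι f fun i => jPairB (m i) (lam i),
      ← reindex_symm, Equiv.trans_apply, Equiv.apply_symm_apply]

end Matrices

end

theorem nonsingular_skew_pair_congruent_sum_of_J_pairs
    {F : Type*} [Field F] [IsAlgClosed F] (hchar : (2 : F) ≠ 0) {n : ℕ}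
    (A B : Matrix (Fin n) (Fin n) F) (hA : Aᵀ = -A) (hB : Bᵀ = -B)
    (hinv : IsUnit A) :
    ∃ (k : ℕ) (sz : Fin k → ℕ)
      (P Q : ∀ i : Fin k, Matrix (Fin (sz i)) (Fin (sz i)) F),
      (∀ i, IsJPair (P i) (Q i)) ∧
      ∃ (S : Matrix (Fin n) (Fin n) F) (e : (Σ i : Fin k, Fin (sz i)) ≃ Fin n),
        IsUnit S ∧
        S * A * Sᵀ = Matrix.reindex e e (Matrix.blockDiagonal' P) ∧
        S * B * Sᵀ = Matrix.reindex e e (Matrix.blockDiagonal' Q) := by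
  set ω := Matrix.toBilin' A
  set T := Matrix.toLin' (A⁻¹ * B)
  have hdet : IsUnit A.det := (isUnit_iff_isUnit_det A).mp hinv
  have hωT : ω.compl₂ T = Matrix.toBilin' B := by
    ext u v
    simp [ω, T, Matrix.toBilin'_apply', mulVec_mulVec, mul_nonsing_inv A hdet]
  have hnd : ω.Nondegenerate :=
    Matrix.nondegenerate_toBilin'_iff.mpr (nondegenerate_of_det_ne_zero hdet.ne_zero)
  have hT : ω.IsSelfAdjoint T := fun u v => by
    rw [Matrix.toBilin'_apply_swap hA, ← LinearMap.compl₂_apply, hωT, Matrix.toBilin'_apply_swap hB,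
      ← hωT, LinearMap.compl₂_apply, neg_neg]
  have hJ := hasJBasis_of_isSelfAdjoint hchar (Matrix.isAlt_toBilin' hchar hA) hnd hT
  exact hJ.exists_congruent_blockDiagonal hωT
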